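/- Let G_n denote the number of structures on an n-element set obtained by partitioning the set into nonempty blocks and equipping each block with a hierarchical ordering (G_0 = 1). Then the exponential generating function ∑_{n≥0} (G_n/n!) x^n equals exp( exp( 1/(2 − e^x) − 1 ) − 1 ) as a formal power series over ℚ; equivalently, ∑_{n≥0} (G_n/n!) x^n = exp( ∑_{n≥1} (H_n/n!) x^n ). -/

import Mathlib

open Finset PowerSeries Filter Nat

/-- `L` is an ordered set partition of the finite set `S`: a finite sequence of pairwise
disjoint nonempty subsets of `S` whose union is `S`. -/
def IsOrderedSetPartition {α : Type*} [DecidableEq α] (S : Finset α) (L : List (Finset α)) :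
    Prop :=
  (∀ T ∈ L, T ≠ ∅) ∧ L.Pairwise Disjoint ∧ L.foldr (· ∪ ·) ∅ = S

/-- The type of ordered set partitions of the finite set `S`. -/
def OrderedSetPartition {α : Type*} [DecidableEq α] (S : Finset α) :=
  {L : List (Finset α) // IsOrderedSetPartition S L}

/-- The ordered Bell number `B n`: the number of ordered set partitions of an `n`-element set. -/
noncomputable def orderedBell (n : ℕ) : ℕ :=
  Nat.card (OrderedSetPartition (Finset.univ : Finset (Fin n)))

/-- A hierarchical ordering (society) on the finite set `S`: an (unordered) set partition of `S`
into nonempty blocks, together with an ordered set partition of each block. -/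
def HierarchicalOrdering {α : Type*} [DecidableEq α] (S : Finset α) :=
  (P : Finpartition S) × ((b : P.parts) → OrderedSetPartition (b : Finset α))

/-- `H n`: the number of hierarchical orderings on an `n`-element set. -/
noncomputable def hier (n : ℕ) : ℕ :=
  Nat.card (HierarchicalOrdering (Finset.univ : Finset (Fin n)))

/-- The formal exponential `exp S` of a power series (intended for `S` with zero constant
term): its `n`-th coefficient is `∑_{k=0}^{n} [xⁿ] Sᵏ / k!`. -/
noncomputable def expComp (S : PowerSeries ℚ) : PowerSeries ℚ :=
  PowerSeries.mk fun n => ∑ k ∈ Finset.range (n + 1), PowerSeries.coeff (R := ℚ) n (S ^ k) / (k ! : ℚ)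


/-- `G n`: the number of structures on an `n`-element set obtained by partitioning the set
into nonempty blocks and equipping each block with a hierarchical ordering
("hierarchies of hierarchical orderings"). -/
noncomputable def hierHier (n : ℕ) : ℕ :=
  Nat.card ((P : Finpartition (Finset.univ : Finset (Fin n))) ×
    ((b : P.parts) → HierarchicalOrdering (b : Finset (Fin n))))

/-!
Both `G` and `H` count structures obtained by splitting a finite set into blocks and putting one of
`c k` structures on each `k`-block. Singling out the block of a fixed element gives
`A (n+1) = ∑ j, (n choose j) * c (j+1) * A (n-j)`, which says `A' = C' A` for the exponential
generating functions `A` and `C = ∑_{k ≥ 1} c k xᵏ/k!`; hence `A = exp C`. For `H` the block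
structures are ordered set partitions, counted by the ordered Bell numbers `B`; for `G` they are
hierarchical orderings. Splitting off the first block of an ordered set partition gives
`B (n+1) = ∑_{k ≤ n} (n+1 choose k) * B k`, i.e. `B = 1 + B (eˣ - 1)`, so `B = 1/(2 - eˣ)`.
-/

def fubini : ℕ → ℕ
  | 0 => 1
  | n + 1 => ∑ k : Fin (n + 1), (n + 1).choose k * fubini k

def assemblyCount (c : ℕ → ℕ) : ℕ → ℕ
  | 0 => 1
  | n + 1 => ∑ j ∈ range (n + 1), n.choose j * (c (j + 1) * assemblyCount c (n - j))

theorem fubini_pos : ∀ n, 0 < fubini n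
  | 0 => by simp [fubini]
  | n + 1 => by
    rw [fubini]
    exact sum_pos (fun k _ => Nat.mul_pos (choose_pos k.isLt.le) (fubini_pos k)) univ_nonempty

section

variable {α : Type*} [DecidableEq α]

theorem List.mem_foldr_union {L : List (Finset α)} {x : α} :
    x ∈ L.foldr (· ∪ ·) ∅ ↔ ∃ T ∈ L, x ∈ T := by
  induction L with
  | nil => simp
  | cons T L ih => simp [ih]

theorem isOrderedSetPartition_nil {S : Finset α} : IsOrderedSetPartition S [] ↔ S = ∅ := by
  simp [IsOrderedSetPartition, eq_comm]

theorem isOrderedSetPartition_cons {S T : Finset α} {L : List (Finset α)} :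
    IsOrderedSetPartition S (T :: L) ↔
      T.Nonempty ∧ T ⊆ S ∧ IsOrderedSetPartition (S \ T) L := by
  have hdisj : (∀ B ∈ L, Disjoint T B) ↔ Disjoint T (L.foldr (· ∪ ·) ∅) := by
    simp only [Finset.disjoint_right, List.mem_foldr_union]
    grind
  have hunion : Disjoint T (L.foldr (· ∪ ·) ∅) ∧ T ∪ L.foldr (· ∪ ·) ∅ = S ↔
      T ⊆ S ∧ L.foldr (· ∪ ·) ∅ = S \ T := by
    constructor
    · rintro ⟨hd, rfl⟩
      exact ⟨subset_union_left, (union_sdiff_cancel_left hd).symm⟩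
    · rintro ⟨hTS, h⟩
      exact ⟨h ▸ disjoint_sdiff, h ▸ union_sdiff_of_subset hTS⟩
  simp only [IsOrderedSetPartition, List.forall_mem_cons, List.pairwise_cons, List.foldr_cons,
    nonempty_iff_ne_empty]
  rw [← hdisj] at hunion
  tauto

theorem isOrderedSetPartition_empty {L : List (Finset α)} :
    IsOrderedSetPartition ∅ L ↔ L = [] := by
  cases L with
  | nil => simp [isOrderedSetPartition_nil]
  | cons T L =>
    simp only [isOrderedSetPartition_cons, subset_empty, reduceCtorEq, iff_false]
    rintro ⟨hT, rfl, -⟩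
    exact not_nonempty_empty hT

namespace OrderedSetPartition

theorem card_empty : Nat.card (OrderedSetPartition (∅ : Finset α)) = 1 :=
  Nat.card_eq_one_iff_exists.2 ⟨⟨[], isOrderedSetPartition_nil.2 rfl⟩, fun L =>
    Subtype.ext (isOrderedSetPartition_empty.1 L.2)⟩

def consCompl {S : Finset α}
    (x : Σ R : S.powerset.erase S, OrderedSetPartition (R : Finset α)) :
    OrderedSetPartition S :=
  ⟨(S \ x.1) :: x.2.1, by
    have hR : (x.1 : Finset α) ⊆ S := mem_powerset.1 (mem_of_mem_erase x.1.2)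
    refine isOrderedSetPartition_cons.2 ⟨sdiff_nonempty.2 fun h =>
      ne_of_mem_erase x.1.2 (hR.antisymm h), sdiff_subset, ?_⟩
    rw [Finset.sdiff_sdiff_eq_self hR]
    exact x.2.2⟩

theorem consCompl_bijective {S : Finset α} (hS : S.Nonempty) :
    Function.Bijective (consCompl (S := S)) := by
  constructor
  · rintro ⟨⟨R, hR⟩, L, hL⟩ ⟨⟨R', hR'⟩, L', hL'⟩ h
    obtain ⟨hRR', rfl⟩ := List.cons.inj (congrArg Subtype.val h)
    obtain rfl : R = R' := by
      rw [← Finset.sdiff_sdiff_eq_self (mem_powerset.1 (mem_of_mem_erase hR)), hRR',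
        Finset.sdiff_sdiff_eq_self (mem_powerset.1 (mem_of_mem_erase hR'))]
    rfl
  · rintro ⟨_ | ⟨T, L⟩, hL⟩
    · exact absurd (isOrderedSetPartition_nil.1 hL) hS.ne_empty
    obtain ⟨hT, hTS, hL⟩ := isOrderedSetPartition_cons.1 hL
    refine ⟨⟨⟨S \ T, mem_erase.2 ⟨?_, mem_powerset.2 sdiff_subset⟩⟩, L, hL⟩, ?_⟩
    · exact fun h => hT.ne_empty <| disjoint_self_iff_empty _ |>.1 <|
        (Finset.sdiff_eq_self_iff_disjoint.1 h).mono_left hTS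
    · exact Subtype.ext (by simp [consCompl, Finset.sdiff_sdiff_eq_self hTS])

end OrderedSetPartition

theorem card_orderedSetPartition (S : Finset α) :
    Nat.card (OrderedSetPartition S) = fubini #S := by
  induction S using Finset.strongInduction with
  | H S ih =>
  rcases S.eq_empty_or_nonempty with rfl | hS
  · simp [OrderedSetPartition.card_empty, fubini]
  have hR (R : S.powerset.erase S) : (R : Finset α) ⊂ S :=
    Finset.ssubset_iff_subset_ne.2 ⟨mem_powerset.1 (mem_of_mem_erase R.2), ne_of_mem_erase R.2⟩
  have (R : S.powerset.erase S) : Finite (OrderedSetPartition (R : Finset α)) :=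
    Nat.finite_of_card_ne_zero (by rw [ih _ (hR R)]; exact (fubini_pos _).ne')
  obtain ⟨n, hn⟩ : ∃ n, #S = n + 1 := Nat.exists_eq_succ_of_ne_zero hS.card_pos.ne'
  have hsum := sum_erase_add S.powerset (fun R => fubini #R) (mem_powerset_self S)
  rw [sum_powerset_apply_card, hn, sum_range_succ, choose_self, one_smul] at hsum
  rw [← Nat.card_eq_of_bijective _ (OrderedSetPartition.consCompl_bijective hS), Nat.card_sigma,
    sum_coe_sort (S.powerset.erase S) (fun R => Nat.card (OrderedSetPartition R)),
    sum_congr rfl fun R hR' => ih R (hR ⟨R, hR'⟩), hn, fubini, Fin.sum_univ_eq_sum_range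
    (fun k => (n + 1).choose k * fubini k)]
  simpa using hsum

instance (S : Finset α) : Finite (OrderedSetPartition S) :=
  Nat.finite_of_card_ne_zero (by rw [card_orderedSetPartition]; exact (fubini_pos _).ne')

end

namespace Finpartition

variable {α : Type*} [DecidableEq α]

theorem parts_avoid_of_mem {S T : Finset α} (P : Finpartition S) (hT : T ∈ P.parts) :
    (P.avoid T).parts = P.parts.erase T := by
  ext B
  rw [mem_avoid, mem_erase]
  constructor
  · rintro ⟨C, hC, hCT, rfl⟩
    have hne : C ≠ T := fun h => hCT h.le
    have hCT' : C \ T = C := Finset.sdiff_eq_self_iff_disjoint.2 (P.disjoint hC hT hne)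
    rw [hCT']
    exact ⟨hne, hC⟩
  · rintro ⟨hBT, hB⟩
    have hdisj := P.disjoint hB hT hBT
    exact ⟨B, hB, fun h => P.ne_bot hB (hdisj.eq_bot_of_le h),
      Finset.sdiff_eq_self_iff_disjoint.2 hdisj⟩

def extendInsert {S : Finset α} {a : α} (ha : a ∈ S)
    (x : Σ T : (S.erase a).powerset, Finpartition (S \ insert a (T : Finset α))) :
    Finpartition S :=
  x.2.extend (insert_ne_empty _ _) sdiff_disjoint <| sdiff_union_of_subset <|
    insert_subset ha <| (mem_powerset.1 x.1.2).trans (erase_subset _ _)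

theorem insert_notMem_parts {S T : Finset α} {a : α} (Q : Finpartition (S \ insert a T)) :
    insert a T ∉ Q.parts := fun h => by
  simpa using Q.le h (mem_insert_self a T)

theorem part_extendInsert {S : Finset α} {a : α} (ha : a ∈ S)
    (x : Σ T : (S.erase a).powerset, Finpartition (S \ insert a (T : Finset α))) :
    (extendInsert ha x).part a = insert a (x.1 : Finset α) :=
  part_eq_of_mem _ (by simp [extendInsert]) (mem_insert_self _ _)

theorem extendInsert_bijective {S : Finset α} {a : α} (ha : a ∈ S) :
    Function.Bijective (extendInsert ha) := by
  constructor
  · rintro ⟨⟨T, hT⟩, Q⟩ ⟨⟨T', hT'⟩, Q'⟩ h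
    have haT {T : Finset α} (hT : T ∈ (S.erase a).powerset) : a ∉ T := fun h =>
      (mem_erase.1 (mem_powerset.1 hT h)).1 rfl
    obtain rfl : T = T' := by
      have := congrArg (part · a) h
      simp only [part_extendInsert] at this
      rw [← erase_insert (haT hT), this, erase_insert (haT hT')]
    obtain rfl : Q = Q' := Finpartition.ext <| by
      simpa only [extendInsert, extend_parts, erase_insert (insert_notMem_parts _)] using
        congrArg (fun P : Finpartition S => P.parts.erase (insert a T)) h
    rfl
  · intro P
    have haP : insert a ((P.part a).erase a) = P.part a := insert_erase (P.mem_part_self.2 ha)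
    refine ⟨⟨⟨(P.part a).erase a, mem_powerset.2 (erase_subset_erase a (P.part_subset a))⟩,
      (P.avoid (P.part a)).copy (by rw [haP])⟩, Finpartition.ext ?_⟩
    simp only [extendInsert, extend_parts, copy_parts, haP,
      parts_avoid_of_mem P (P.part_mem.2 ha), insert_erase (P.part_mem.2 ha)]

end Finpartition

theorem sum_prod_parts_eq_assemblyCount {α : Type*} [DecidableEq α] (c : ℕ → ℕ) (S : Finset α) :
    ∑ P : Finpartition S, ∏ b ∈ P.parts, c #b = assemblyCount c #S := by
  induction S using Finset.strongInduction with
  | H S ih =>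
  rcases S.eq_empty_or_nonempty with rfl | ⟨a, ha⟩
  · rw [card_empty, assemblyCount, ← bot_eq_empty, Fintype.sum_unique,
      Finpartition.parts_eq_empty_iff.2 rfl, prod_empty]
  have hcard : #(S.erase a) + 1 = #S := card_erase_add_one ha
  rw [← Fintype.sum_bijective _ (Finpartition.extendInsert_bijective ha) _ _ fun _ => rfl,
    Fintype.sum_sigma]
  calc
    _ = ∑ T : (S.erase a).powerset,
          c (#(T : Finset α) + 1) * assemblyCount c (#(S.erase a) - #(T : Finset α)) := by
      refine Fintype.sum_congr _ _ fun ⟨T, hT⟩ => ?_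
      have hT : T ⊆ S.erase a := mem_powerset.1 hT
      have haT : a ∉ T := fun h => (mem_erase.1 (hT h)).1 rfl
      have hB : insert a T ⊆ S := insert_subset ha (hT.trans (erase_subset _ _))
      simp only [Finpartition.extendInsert, Finpartition.extend_parts,
        prod_insert (Finpartition.insert_notMem_parts _)]
      rw [← mul_sum, ih _ (sdiff_ssubset hB (insert_nonempty _ _)), card_sdiff_of_subset hB,
        card_insert_of_notMem haT]
      congr 2
      omega
    _ = assemblyCount c #S := by
      rw [sum_coe_sort (S.erase a).powerset
          (fun T => c (#T + 1) * assemblyCount c (#(S.erase a) - #T)),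
        sum_powerset_apply_card (fun k => c (k + 1) * assemblyCount c (#(S.erase a) - k)),
        ← hcard, assemblyCount]
      simp only [smul_eq_mul]

section Counting

variable {α : Type*} [DecidableEq α]

theorem card_sigma_finpartition_pi (St : Finset α → Type*) [∀ b, Finite (St b)] (c : ℕ → ℕ)
    (hc : ∀ b, Nat.card (St b) = c #b) (S : Finset α) :
    Nat.card ((P : Finpartition S) × ((b : P.parts) → St b)) = assemblyCount c #S := by
  simp only [Nat.card_sigma, Nat.card_pi, hc]
  simp_rw [prod_coe_sort _ (fun b => c #b)]
  exact sum_prod_parts_eq_assemblyCount c S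

instance (S : Finset α) : Finite (HierarchicalOrdering S) :=
  inferInstanceAs (Finite (Σ _ : Finpartition S, _))

theorem card_hierarchicalOrdering (S : Finset α) :
    Nat.card (HierarchicalOrdering S) = assemblyCount fubini #S :=
  card_sigma_finpartition_pi _ fubini card_orderedSetPartition S

end Counting

theorem hier_eq_assemblyCount : hier = assemblyCount fubini := funext fun n => by
  rw [hier, card_hierarchicalOrdering, Finset.card_fin]

theorem hierHier_eq_assemblyCount : hierHier = assemblyCount hier := funext fun n => by
  rw [hierHier, card_sigma_finpartition_pi HierarchicalOrdering hier
    (fun b => by rw [card_hierarchicalOrdering, hier_eq_assemblyCount]), Finset.card_fin]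

theorem coeff_pow_eq_zero_of_constantCoeff_eq_zero {R : Type*} [Semiring R] {D : R⟦X⟧}
    (hD : constantCoeff D = 0) {n k : ℕ} (h : n < k) : coeff n (D ^ k) = 0 :=
  coeff_of_lt_order _ <| (Nat.cast_lt.2 h).trans_le (le_order_pow_of_constantCoeff_eq_zero k hD)

theorem expComp_eq_subst {D : ℚ⟦X⟧} (hD : constantCoeff D = 0) :
    expComp D = (exp ℚ).subst D := by
  ext n
  rw [coeff_subst' (HasSubst.of_constantCoeff_zero' hD), expComp, coeff_mk,
    finsum_eq_sum_of_support_subset (s := range (n + 1))]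
  · refine sum_congr rfl fun k _ => ?_
    simp [coeff_exp, div_eq_inv_mul]
  · intro k hk
    by_contra h
    simp only [coe_range, Set.mem_Iio, not_lt] at h
    exact hk (by simp [coeff_pow_eq_zero_of_constantCoeff_eq_zero hD h])

theorem derivative_expComp {D : ℚ⟦X⟧} (hD : constantCoeff D = 0) :
    d⁄dX ℚ (expComp D) = d⁄dX ℚ D * expComp D := by
  rw [expComp_eq_subst hD, derivative_subst (HasSubst.of_constantCoeff_zero' hD), derivative_exp,
    mul_comm]

theorem constantCoeff_expComp (D : ℚ⟦X⟧) : constantCoeff (expComp D) = 1 := by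
  rw [← coeff_zero_eq_constantCoeff_apply, expComp, coeff_mk]
  simp

theorem eq_expComp_of_derivative {D F : ℚ⟦X⟧} (hD : constantCoeff D = 0)
    (hF₀ : constantCoeff F = 1) (hF : d⁄dX ℚ F = d⁄dX ℚ D * F) : F = expComp D := by
  ext n
  induction n using Nat.strong_induction_on with
  | _ n ih =>
  rcases n with _ | n
  · simp [hF₀, constantCoeff_expComp]
  have h : coeff n (d⁄dX ℚ F) = coeff n (d⁄dX ℚ (expComp D)) := by
    rw [hF, derivative_expComp hD, coeff_mul, coeff_mul]
    refine sum_congr rfl fun p hp => ?_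
    rw [ih p.2 (by have := mem_antidiagonal.1 hp; omega)]
  rw [coeff_derivative, coeff_derivative] at h
  exact mul_right_cancel₀ (by positivity) h

def egf (a : ℕ → ℕ) : ℚ⟦X⟧ :=
  mk fun n => (a n : ℚ) / n !

theorem egf_sub_one {a : ℕ → ℕ} (h : a 0 = 1) :
    egf a - 1 = mk fun n => if n = 0 then 0 else (a n : ℚ) / n ! := by
  ext (_ | n) <;> simp [egf, h]

theorem egf_assemblyCount (c : ℕ → ℕ) :
    egf (assemblyCount c) = expComp (mk fun n => if n = 0 then 0 else (c n : ℚ) / n !) := by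
  refine eq_expComp_of_derivative (by simp [← coeff_zero_eq_constantCoeff_apply])
    (by simp [egf, ← coeff_zero_eq_constantCoeff_apply, assemblyCount]) ?_
  ext n
  rw [coeff_derivative, egf, coeff_mk, assemblyCount, coeff_mul,
    Nat.sum_antidiagonal_eq_sum_range_succ_mk]
  push_cast
  rw [sum_div, sum_mul]
  refine sum_congr rfl fun j hj => ?_
  have hj : j ≤ n := Nat.lt_succ_iff.1 (mem_range.1 hj)
  simp only [coeff_derivative, coeff_mk, if_neg (succ_ne_zero j)]
  rw [cast_choose ℚ hj, factorial_succ n, factorial_succ j]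
  push_cast
  field_simp

theorem egf_fubini : egf fubini = (2 - exp ℚ)⁻¹ := by
  have key : egf fubini * (exp ℚ - 1) = egf fubini - 1 := by
    ext (_ | m)
    · simp [egf, fubini, coeff_mul]
    rw [coeff_mul, Nat.sum_antidiagonal_succ', Nat.sum_antidiagonal_eq_sum_range_succ_mk]
    simp only [map_sub, coeff_exp, coeff_one, egf, coeff_mk, fubini, Algebra.algebraMap_self,
      RingHom.id_apply, factorial_zero, succ_ne_zero, if_true, if_false]
    rw [Fin.sum_univ_eq_sum_range (fun k => (m + 1).choose k * fubini k)]
    push_cast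
    simp only [div_one, sub_self, mul_zero, zero_add, sub_zero, sum_div]
    refine sum_congr rfl fun k hk => ?_
    have hk : k < m + 1 := mem_range.1 hk
    rw [cast_choose ℚ hk.le, show m + 1 - k = m - k + 1 by omega]
    field_simp
  rw [PowerSeries.eq_inv_iff_mul_eq_one (by norm_num [map_ofNat])]
  linear_combination (-1 : ℚ⟦X⟧) * key

/-- **Hierarchies of hierarchical orderings.** The e.g.f. of `G_n` equals
`exp( exp( 1/(2 − eˣ) − 1 ) − 1 )`; equivalently, it equals `exp( ∑_{n≥1} (H_n/n!)xⁿ )`. -/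
theorem egf_hierHier :
    (PowerSeries.mk fun n => (hierHier n : ℚ) / (n ! : ℚ)) =
        expComp (expComp ((2 - PowerSeries.exp ℚ)⁻¹ - 1) - 1) ∧
      (PowerSeries.mk fun n => (hierHier n : ℚ) / (n ! : ℚ)) =
        expComp (PowerSeries.mk fun n => if n = 0 then 0 else (hier n : ℚ) / (n ! : ℚ)) := by
  show egf hierHier = _ ∧ egf hierHier = _
  have hier_zero : hier 0 = 1 := by rw [hier_eq_assemblyCount, assemblyCount]
  have hG : egf hierHier = expComp (mk fun n => if n = 0 then 0 else (hier n : ℚ) / n !) := by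
    rw [hierHier_eq_assemblyCount, egf_assemblyCount]
  refine ⟨?_, hG⟩
  rw [hG, ← egf_sub_one hier_zero, hier_eq_assemblyCount, egf_assemblyCount,
    ← egf_sub_one (by rw [fubini] : fubini 0 = 1), egf_fubini]
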